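/- arXiv:1012.1677 — 3 statements merged into one kernel-verified Lean document; each statement's English description precedes it below -/
import Mathlib

section
/- Let V be a finite set, a : V × V → {0,1} symmetric with a(v,v) = 0 and each vertex having at least one neighbor. For η : V → ℝ and s ∈ V, with degree d(s) = ∑_{s'} a(s,s') and Laplacian Δη(s) = ∑_{s'} a(s,s')(η(s') - η(s)), the one-step energy decrease equals E(η) - E(M_s η) = (Δη(s))² / d(s), where M_s η replaces η(s) by the neighbor average and E is the Dirichlet energy E(η) = (1/2) ∑_{v,w} a(v,w)(η(w)-η(v))². -/
/-- One-step energy decrease identity: `E(η) - E(M_s η) = (Δη(s))² / d(s)`. -/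
theorem harness_update_energy_identity {V : Type*} [Fintype V] [DecidableEq V]
    (a : V → V → ℝ)
    (hsymm : ∀ v w, a v w = a w v) (hdiag : ∀ v, a v v = 0)
    (h01 : ∀ v w, a v w = 0 ∨ a v w = 1)
    (hdeg : ∀ v, 1 ≤ ∑ w, a v w)
    (η : V → ℝ) (s : V)
    (M : V → ℝ)
    (hM : M = fun v => if v = s then (∑ w, a s w)⁻¹ * ∑ w, a s w * η w else η v)
    (E : (V → ℝ) → ℝ)
    (hE : E = fun f => (1 / 2) * ∑ v, ∑ w, a v w * (f w - f v) ^ 2) :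
    E η - E M = (∑ w, a s w * (η w - η s)) ^ 2 / (∑ w, a s w) := by
  set d : ℝ := ∑ w, a s w with hd
  have hdpos : 0 < d := lt_of_lt_of_le one_pos (hdeg s)
  have hdne : d ≠ 0 := ne_of_gt hdpos
  set m : ℝ := d⁻¹ * ∑ w, a s w * η w with hm
  have hMs : M s = m := by rw [hM]; simp
  have hMne : ∀ v, v ≠ s → M v = η v := by intro v hv; rw [hM]; simp [hv]
  -- the summand
  set g : V → V → ℝ := fun v w => a v w * ((η w - η v) ^ 2 - (M w - M v) ^ 2) with hg
  have hgss : g s s = 0 := by simp [hg, hdiag s]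
  have hgzero : ∀ v w, v ≠ s → w ≠ s → g v w = 0 := by
    intro v w hv hw
    simp [hg, hMne v hv, hMne w hw]
  -- E η - E M = (1/2) * ∑ v, ∑ w, g v w
  have hdiff : E η - E M = (1 / 2) * ∑ v, ∑ w, g v w := by
    rw [hE]
    simp only [hg]
    rw [← mul_sub, ← Finset.sum_sub_distrib]
    congr 1
    apply Finset.sum_congr rfl
    intro v _
    rw [← Finset.sum_sub_distrib]
    apply Finset.sum_congr rfl
    intro w _
    ring
  -- collapse the double sum
  have hrow : ∀ v, v ≠ s → ∑ w, g v w = g v s := by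
    intro v hv
    apply Finset.sum_eq_single s
    · intro w _ hw; exact hgzero v w hv hw
    · intro h; exact absurd (Finset.mem_univ s) h
  have hsum : ∑ v, ∑ w, g v w = (∑ w, g s w) + ∑ v, g v s := by
    rw [← Finset.add_sum_erase _ _ (Finset.mem_univ s)]
    congr 1
    rw [Finset.sum_congr rfl (fun v hv => hrow v (Finset.ne_of_mem_erase hv))]
    rw [← Finset.add_sum_erase _ (fun v => g v s) (Finset.mem_univ s), hgss, zero_add]
  have hcol : ∑ v, g v s = ∑ w, g s w := by
    apply Finset.sum_congr rfl
    intro v _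
    by_cases hv : v = s
    · subst hv; rfl
    · simp only [hg, hsymm v s, hMne v hv]
      ring
  -- evaluate the single sum
  have hS : ∑ w, a s w * η w = d * m := by
    rw [hm]; field_simp
  have hrowval : ∑ w, g s w = d * (m - η s) ^ 2 := by
    have hpt : ∀ w, g s w = (2 * (m - η s)) * (a s w * η w)
        - ((m - η s) * (η s + m)) * a s w := by
      intro w
      by_cases hw : w = s
      · subst hw; simp [hg, hdiag]
      · simp only [hg, hMne w hw, hMs]
        ring
    rw [Finset.sum_congr rfl (fun w _ => hpt w), Finset.sum_sub_distrib,
      ← Finset.mul_sum, ← Finset.mul_sum, hS, ← hd]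
    ring
  have hDelta : ∑ w, a s w * (η w - η s) = d * (m - η s) := by
    have : ∀ w, a s w * (η w - η s) = a s w * η w - η s * a s w := fun w => by ring
    rw [Finset.sum_congr rfl (fun w _ => this w), Finset.sum_sub_distrib,
      ← Finset.mul_sum, hS, ← hd]
    ring
  rw [hdiff, hsum, hcol, hrowval, hDelta]
  field_simp
  ring
end

section
/- Let (Ω, μ) be a probability space and (s_n)_{n∈ℤ} measurable maps Ω → ℝ^d together with a family of measure-preserving transformations τ_{s_n(ω)} satisfying: (B1) s_{-n}(τ_{s_n(ω)} ω) = -s_n(ω), and (B3) ω ↦ τ_{s_n(ω)} ω preserves μ for each n. Then for every covariant, absolutely summable field ζ (meaning ζ(s_{-n}(ω'), 0, ω') = ζ(0, s_n(ω), ω) when ω' = τ_{s_n(ω)} ω, and ∑_n E|ζ(0, s_n, ·)| < ∞): ∑_{n∈ℤ} E[ζ(0, s_n(ω), ω)] = ∑_{n∈ℤ} E[ζ(s_n(ω), 0, ω)]. -/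
open MeasureTheory

/-- Abstract mass transport principle (Lemma 2.1): given a measurable enumeration
`(s n)` of points with the reflection property (B1) and point-stationarity (B3),
the expectations of a covariant absolutely-summable field summed over outgoing edges
from the origin equal those summed over incoming edges. -/
theorem mass_transport_principle_points {Ω : Type*} [MeasurableSpace Ω]
    (μ : Measure Ω) [IsProbabilityMeasure μ] (d : ℕ)
    (s : ℤ → Ω → EuclideanSpace ℝ (Fin d))
    (τ : EuclideanSpace ℝ (Fin d) → Ω → Ω)
    (hB1 : ∀ (n : ℤ) (ω : Ω), s (-n) (τ (s n ω) ω) = -(s n ω))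
    (hB3 : ∀ n : ℤ, MeasurePreserving (fun ω => τ (s n ω) ω) μ μ)
    (ζ : EuclideanSpace ℝ (Fin d) → EuclideanSpace ℝ (Fin d) → Ω → ℝ)
    (hcov : ∀ (n : ℤ) (ω : Ω),
      ζ (s (-n) (τ (s n ω) ω)) 0 (τ (s n ω) ω) = ζ 0 (s n ω) ω)
    (hint : ∀ n : ℤ, Integrable (fun ω => ζ 0 (s n ω) ω) μ)
    (hint' : ∀ n : ℤ, Integrable (fun ω => ζ (s n ω) 0 ω) μ)
    (hsum : Summable fun n : ℤ => ∫ ω, |ζ 0 (s n ω) ω| ∂μ) :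
    ∑' n : ℤ, ∫ ω, ζ 0 (s n ω) ω ∂μ = ∑' n : ℤ, ∫ ω, ζ (s n ω) 0 ω ∂μ := by
  have key : ∀ n : ℤ, ∫ ω, ζ 0 (s n ω) ω ∂μ = ∫ ω, ζ (s (-n) ω) 0 ω ∂μ := by
    intro n
    have h1 : (fun ω => ζ 0 (s n ω) ω)
        = fun ω => ζ (s (-n) (τ (s n ω) ω)) 0 (τ (s n ω) ω) := by
      funext ω; rw [hcov n ω]
    rw [h1]
    have hmap := (hB3 n).map_eq
    have hae : AEStronglyMeasurable (fun ω => ζ (s (-n) ω) 0 ω)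
        (Measure.map (fun ω => τ (s n ω) ω) μ) := by
      rw [hmap]; exact (hint' (-n)).aestronglyMeasurable
    calc ∫ ω, ζ (s (-n) (τ (s n ω) ω)) 0 (τ (s n ω) ω) ∂μ
        = ∫ ω, ζ (s (-n) ω) 0 ω ∂(Measure.map (fun ω => τ (s n ω) ω) μ) :=
          (integral_map (hB3 n).measurable.aemeasurable hae).symm
      _ = ∫ ω, ζ (s (-n) ω) 0 ω ∂μ := by rw [hmap]
  calc ∑' n : ℤ, ∫ ω, ζ 0 (s n ω) ω ∂μ
      = ∑' n : ℤ, ∫ ω, ζ (s (-n) ω) 0 ω ∂μ := by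
        exact tsum_congr key
    _ = ∑' n : ℤ, ∫ ω, ζ (s n ω) 0 ω ∂μ :=
        (Equiv.neg ℤ).tsum_eq (fun n => ∫ ω, ζ (s n ω) 0 ω ∂μ)
end

section
/- Let V be a finite set, a : V × V → {0,1} symmetric with zero diagonal, connected as a graph, and fix boundary values: a nonempty set B ⊆ V and g : B → ℝ. Among all η : V → ℝ with η|_B = g, the Dirichlet energy E(η) = (1/2)∑_{v,w} a(v,w)(η(w) - η(v))² is minimized by the unique function h with h|_B = g that is harmonic on V \ B (i.e. Δh(v) = 0 for all v ∉ B). -/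
open Finset

section Aux

variable {V : Type*} [Fintype V]

/-- Maximum principle: a function vanishing on `B` and harmonic off `B` is `≤ 0`. -/
private lemma dirichlet_maxp (a : V → V → ℝ)
    (h01 : ∀ v w, a v w = 0 ∨ a v w = 1)
    (hconn : ∀ v w : V, Relation.ReflTransGen (fun x y => a x y = 1) v w)
    (B : Set V) (hB : B.Nonempty)
    (h : V → ℝ) (hb : ∀ v ∈ B, h v = 0)
    (hh : ∀ v ∉ B, ∑ w, a v w * (h w - h v) = 0) :
    ∀ v, h v ≤ 0 := by
  classical
  have ha : ∀ v w, 0 ≤ a v w := by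
    intro v w; rcases h01 v w with h' | h' <;> simp [h']
  have hne : Nonempty V := ⟨hB.choose⟩
  obtain ⟨v0, -, hv0⟩ := Finset.exists_max_image (Finset.univ : Finset V) h univ_nonempty
  have hle : ∀ v, h v ≤ h v0 := fun v => hv0 v (mem_univ v)
  have prop : ∀ x, Relation.ReflTransGen (fun p q => a p q = 1) v0 x →
      (h x = h v0 ∨ ∃ b' ∈ B, h b' = h v0) := by
    intro x hx
    induction hx with
    | refl => exact Or.inl rfl
    | @tail p q hp hpq ih =>
      rcases ih with hpM | hr
      · by_cases hpB : p ∈ B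
        · exact Or.inr ⟨p, hpB, hpM⟩
        · have hsum := hh p hpB
          have hterm : ∀ w ∈ (Finset.univ : Finset V), a p w * (h w - h p) ≤ 0 := by
            intro w _
            have : h w - h p ≤ 0 := by
              have := hle w; rw [hpM]; linarith
            exact mul_nonpos_of_nonneg_of_nonpos (ha p w) this
          have hz := (Finset.sum_eq_zero_iff_of_nonpos hterm).mp hsum q (mem_univ q)
          rw [hpq, one_mul, sub_eq_zero] at hz
          exact Or.inl (hz.trans hpM)
      · exact Or.inr hr
  obtain ⟨b, hbB⟩ := hB
  have key : ∃ b' ∈ B, h b' = h v0 := by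
    rcases prop b (hconn v0 b) with hM | hr
    · exact ⟨b, hbB, hM⟩
    · exact hr
  obtain ⟨b', hb'B, hb'M⟩ := key
  have hM0 : h v0 = 0 := by rw [← hb'M]; exact hb b' hb'B
  intro v; rw [← hM0]; exact hle v

/-- Uniqueness for the homogeneous problem. -/
private lemma dirichlet_uniq0 (a : V → V → ℝ)
    (h01 : ∀ v w, a v w = 0 ∨ a v w = 1)
    (hconn : ∀ v w : V, Relation.ReflTransGen (fun x y => a x y = 1) v w)
    (B : Set V) (hB : B.Nonempty)
    (h : V → ℝ) (hb : ∀ v ∈ B, h v = 0)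
    (hh : ∀ v ∉ B, ∑ w, a v w * (h w - h v) = 0) :
    h = 0 := by
  have h1 := dirichlet_maxp a h01 hconn B hB h hb hh
  have hb' : ∀ v ∈ B, (-h) v = 0 := by intro v hv; simp [hb v hv]
  have hh' : ∀ v ∉ B, ∑ w, a v w * ((-h) w - (-h) v) = 0 := by
    intro v hv
    have : ∑ w, a v w * ((-h) w - (-h) v) = ∑ w, -(a v w * (h w - h v)) :=
      Finset.sum_congr rfl fun w _ => by simp; ring
    rw [this, Finset.sum_neg_distrib, hh v hv, neg_zero]
  have h2 := dirichlet_maxp a h01 hconn B hB (-h) hb' hh'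
  funext v
  have := h2 v
  simp only [Pi.neg_apply, neg_nonpos] at this
  exact le_antisymm (h1 v) this

end Aux

/-- Dirichlet principle on a finite connected graph: there is a unique function with the
given boundary values on `B` that is harmonic off `B`, and it minimizes the Dirichlet
energy among all functions with these boundary values. -/
theorem dirichlet_principle {V : Type*} [Fintype V]
    (a : V → V → ℝ)
    (hsymm : ∀ v w, a v w = a w v) (hdiag : ∀ v, a v v = 0)
    (h01 : ∀ v w, a v w = 0 ∨ a v w = 1)
    (hconn : ∀ v w : V, Relation.ReflTransGen (fun x y => a x y = 1) v w)
    (B : Set V) (hB : B.Nonempty) (g : V → ℝ)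
    (E : (V → ℝ) → ℝ)
    (hE : E = fun f => (1 / 2) * ∑ v, ∑ w, a v w * (f w - f v) ^ 2) :
    (∃! h : V → ℝ, (∀ v ∈ B, h v = g v) ∧ (∀ v ∉ B, ∑ w, a v w * (h w - h v) = 0)) ∧
    (∀ h : V → ℝ, (∀ v ∈ B, h v = g v) → (∀ v ∉ B, ∑ w, a v w * (h w - h v) = 0) →
      ∀ η : V → ℝ, (∀ v ∈ B, η v = g v) → E h ≤ E η) := by
  classical
  have ha : ∀ v w, 0 ≤ a v w := by
    intro v w; rcases h01 v w with h' | h' <;> simp [h']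
  -- the linear operator
  let L : (V → ℝ) →ₗ[ℝ] (V → ℝ) :=
    { toFun := fun f v => if v ∈ B then f v else ∑ w, a v w * (f w - f v)
      map_add' := by
        intro f f'; funext v
        by_cases hv : v ∈ B
        · simp [hv]
        · simp only [hv, if_false, Pi.add_apply, ← Finset.sum_add_distrib]
          exact Finset.sum_congr rfl fun w _ => by ring
      map_smul' := by
        intro c f; funext v
        by_cases hv : v ∈ B
        · simp [hv]
        · simp only [hv, if_false, Pi.smul_apply, RingHom.id_apply, smul_eq_mul,
            Finset.mul_sum]
          exact Finset.sum_congr rfl fun w _ => by ring }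
  have hLinj : Function.Injective L := by
    rw [← LinearMap.ker_eq_bot, LinearMap.ker_eq_bot']
    intro f hf
    have hfb : ∀ v ∈ B, f v = 0 := by
      intro v hv
      have := congrFun hf v
      simpa [L, hv] using this
    have hfh : ∀ v ∉ B, ∑ w, a v w * (f w - f v) = 0 := by
      intro v hv
      have := congrFun hf v
      simpa [L, hv] using this
    exact dirichlet_uniq0 a h01 hconn B hB f hfb hfh
  have hLsurj : Function.Surjective L := LinearMap.injective_iff_surjective.mp hLinj
  obtain ⟨h0, hh0⟩ := hLsurj (fun v => if v ∈ B then g v else 0)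
  have hh0b : ∀ v ∈ B, h0 v = g v := by
    intro v hv
    have := congrFun hh0 v
    simpa [L, hv] using this
  have hh0h : ∀ v ∉ B, ∑ w, a v w * (h0 w - h0 v) = 0 := by
    intro v hv
    have := congrFun hh0 v
    simpa [L, hv] using this
  -- minimality, proved for an arbitrary solution
  have hmin : ∀ h : V → ℝ, (∀ v ∈ B, h v = g v) → (∀ v ∉ B, ∑ w, a v w * (h w - h v) = 0) →
      ∀ η : V → ℝ, (∀ v ∈ B, η v = g v) → E h ≤ E η := by
    intro h hbd hharm η hηb
    set d : V → ℝ := fun v => η v - h v with hd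
    have hdb : ∀ v ∈ B, d v = 0 := by
      intro v hv; simp [hd, hbd v hv, hηb v hv]
    have hzero : ∀ v, d v * (∑ w, a v w * (h w - h v)) = 0 := by
      intro v
      by_cases hv : v ∈ B
      · rw [hdb v hv, zero_mul]
      · rw [hharm v hv, mul_zero]
    have hA : ∑ v, ∑ w, a v w * (h w - h v) * d w = 0 := by
      rw [Finset.sum_comm]
      have step : ∀ w, ∑ v, a v w * (h w - h v) * d w
          = -(d w * ∑ v, a w v * (h v - h w)) := by
        intro w
        rw [Finset.mul_sum, ← Finset.sum_neg_distrib]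
        exact Finset.sum_congr rfl fun v _ => by rw [hsymm v w]; ring
      simp only [step]
      simp [hzero]
    have hBt : ∑ v, ∑ w, a v w * (h w - h v) * d v = 0 := by
      have step : ∀ v, ∑ w, a v w * (h w - h v) * d v
          = d v * ∑ w, a v w * (h w - h v) := by
        intro v
        rw [Finset.mul_sum]
        exact Finset.sum_congr rfl fun w _ => by ring
      simp only [step]
      simp [hzero]
    have hC : ∑ v, ∑ w, a v w * (h w - h v) * (d w - d v) = 0 := by
      have : ∀ v w, a v w * (h w - h v) * (d w - d v)
          = a v w * (h w - h v) * d w - a v w * (h w - h v) * d v := fun v w => by ring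
      simp only [this, Finset.sum_sub_distrib]
      rw [hA, hBt, sub_zero]
    have hexp : ∀ v w, a v w * (η w - η v) ^ 2
        = a v w * (h w - h v) ^ 2 + 2 * (a v w * (h w - h v) * (d w - d v))
          + a v w * (d w - d v) ^ 2 := by
      intro v w; simp only [hd]; ring
    have hEd : 0 ≤ ∑ v, ∑ w, a v w * (d w - d v) ^ 2 :=
      Finset.sum_nonneg fun v _ => Finset.sum_nonneg fun w _ =>
        mul_nonneg (ha v w) (sq_nonneg _)
    rw [hE]
    simp only
    have hsplit : ∑ v, ∑ w, a v w * (η w - η v) ^ 2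
        = ∑ v, ∑ w, a v w * (h w - h v) ^ 2
          + 2 * (∑ v, ∑ w, a v w * (h w - h v) * (d w - d v))
          + ∑ v, ∑ w, a v w * (d w - d v) ^ 2 := by
      simp only [hexp, Finset.sum_add_distrib, Finset.mul_sum]
    rw [hsplit, hC]
    linarith
  refine ⟨⟨h0, ⟨hh0b, hh0h⟩, ?_⟩, hmin⟩
  rintro h' ⟨h'b, h'h⟩
  have hdiffb : ∀ v ∈ B, (h' - h0) v = 0 := by
    intro v hv; simp [h'b v hv, hh0b v hv]
  have hdiffh : ∀ v ∉ B, ∑ w, a v w * ((h' - h0) w - (h' - h0) v) = 0 := by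
    intro v hv
    have : ∑ w, a v w * ((h' - h0) w - (h' - h0) v)
        = ∑ w, (a v w * (h' w - h' v) - a v w * (h0 w - h0 v)) :=
      Finset.sum_congr rfl fun w _ => by simp; ring
    rw [this, Finset.sum_sub_distrib, h'h v hv, hh0h v hv, sub_zero]
  have := dirichlet_uniq0 a h01 hconn B hB (h' - h0) hdiffb hdiffh
  exact sub_eq_zero.mp this
end
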